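/- Let k be a field and 0 → W_0 → W_1 → W_2 → 0 a sequence of continuous k-linear maps between profinite topological k-modules. The following are equivalent: (i) the sequence is exact as a sequence of k-modules; (ii) it is strict-exact; (iii) it is split-exact in the category of topological k-modules (there is a continuous k-linear section of W_1 → W_2); (iv) the dual sequence 0 → D^c(W_2) → D^c(W_1) → D^c(W_0) → 0 of continuous duals is exact. -/

import Mathlib

variable (k W : Type*) [Field k] [AddCommGroup W] [Module k W] [TopologicalSpace W]

/-- The set of open cofinite submodules of a topological module. -/
def Cofin : Set (Submodule k W) :=
  {W' | IsOpen (W' : Set W) ∧ Module.Finite k (W ⧸ W')}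

/-- The canonical map from `W` to the product of its discrete finitely generated
quotients by open cofinite submodules. -/
def canonMap : W → ∀ W' : Cofin k W, W ⧸ W'.1 :=
  fun w W' => Submodule.Quotient.mk w

/-- The inverse limit, realized as the set of compatible families inside the product. -/
def cofinLimit : Set (∀ W' : Cofin k W, W ⧸ W'.1) :=
  {f | ∀ (W₁ W₂ : Cofin k W) (h : W₁.1 ≤ W₂.1),
    Submodule.mapQ W₁.1 W₂.1 LinearMap.id (by simpa using h) (f W₁) = f W₂}

/-- A topological module is profinite if the canonical map to the inverse limit of its
discrete finitely generated quotients is an isomorphism of topological modules,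
i.e. a homeomorphism onto the limit (with its subspace topology from the product). -/
def IsProfinite : Prop :=
  Topology.IsInducing (canonMap k W) ∧ Function.Injective (canonMap k W) ∧
    Set.range (canonMap k W) = cofinLimit k W

section CosetAPI

variable {k : Type*} [Field k] {V V' : Type*} [AddCommGroup V] [Module k V]
  [AddCommGroup V'] [Module k V']

/-- A coset of a submodule. -/
def IsCoset (k : Type*) [Field k] {V : Type*} [AddCommGroup V] [Module k V] (S : Set V) : Prop :=
  ∃ (x : V) (N : Submodule k V), S = {y | y - x ∈ N}

theorem IsCoset.nonempty {S : Set V} (h : IsCoset k S) : S.Nonempty := by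
  obtain ⟨x, N, rfl⟩ := h
  exact ⟨x, by simp⟩

theorem IsCoset.image {S : Set V} (h : IsCoset k S) (f : V →ₗ[k] V') : IsCoset k (f '' S) := by
  obtain ⟨x, N, rfl⟩ := h
  refine ⟨f x, N.map f, ?_⟩
  ext y
  constructor
  · rintro ⟨z, hz, rfl⟩
    exact ⟨z - x, hz, by simp⟩
  · rintro ⟨n, hn, hny⟩
    exact ⟨n + x, by simpa using hn, by rw [map_add]; linear_combination (norm := module) hny⟩

theorem isCoset_fiber (f : V →ₗ[k] V') {a : V'} {y₀ : V} (h : f y₀ = a) :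
    IsCoset k {y | f y = a} := by
  refine ⟨y₀, LinearMap.ker f, ?_⟩
  ext y
  simp only [Set.mem_setOf_eq, LinearMap.mem_ker, map_sub, h, sub_eq_zero]

theorem IsCoset.inter {S T : Set V} (hS : IsCoset k S) (hT : IsCoset k T)
    (hne : (S ∩ T).Nonempty) : IsCoset k (S ∩ T) := by
  obtain ⟨x, N, rfl⟩ := hS
  obtain ⟨z, P, rfl⟩ := hT
  obtain ⟨w, hw1, hw2⟩ := hne
  refine ⟨w, N ⊓ P, ?_⟩
  ext y
  simp only [Set.mem_inter_iff, Set.mem_setOf_eq, Submodule.mem_inf]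
  constructor
  · rintro ⟨h1, h2⟩
    exact ⟨by simpa using N.sub_mem h1 hw1, by simpa using P.sub_mem h2 hw2⟩
  · rintro ⟨h1, h2⟩
    exact ⟨by simpa using N.add_mem h1 hw1, by simpa using P.add_mem h2 hw2⟩

/-- From `S ⊆ T` for cosets, the direction submodules are comparable. -/
theorem coset_dir_le {x z : V} {N P : Submodule k V}
    (h : {y | y - x ∈ N} ⊆ {y | y - z ∈ P}) : N ≤ P := by
  intro n hn
  have hx : x - z ∈ P := h (by simp)
  have hxn : x + n - z ∈ P := h (by simpa using hn)
  simpa using P.sub_mem hxn hx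

theorem coset_eq_of_dir_eq {x z : V} {N : Submodule k V}
    (h : {y | y - x ∈ N} ⊆ {y | y - z ∈ N}) : {y | y - x ∈ N} = {y | y - z ∈ N} := by
  have hx : x - z ∈ N := h (by simp)
  ext y
  simp only [Set.mem_setOf_eq]
  constructor
  · intro hy; simpa using N.add_mem hy hx
  · intro hy; simpa using N.sub_mem hy hx

theorem exists_least_submodule {ι : Sort*} [Nonempty ι] [IsArtinian k V]
    (K : ι → Submodule k V) (hdir : ∀ i j, ∃ l, K l ≤ K i ∧ K l ≤ K j) :
    ∃ i₀, ∀ i, K i₀ ≤ K i := by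
  obtain ⟨N₀, ⟨i₀, rfl⟩, hmin⟩ := IsArtinian.set_has_minimal (Set.range K) (Set.range_nonempty K)
  refine ⟨i₀, fun i => ?_⟩
  obtain ⟨l, hl1, hl2⟩ := hdir i₀ i
  have : K l = K i₀ := by
    by_contra hne
    exact hmin (K l) ⟨l, rfl⟩ (lt_of_le_of_ne hl1 hne)
  exact this ▸ hl2

/-- In an Artinian module, a directed family of cosets has a least element. -/
theorem exists_least_coset {ι : Sort*} [Nonempty ι] [IsArtinian k V]
    (T : ι → Set V) (hc : ∀ i, IsCoset k (T i))
    (hdir : ∀ i j, ∃ l, T l ⊆ T i ∧ T l ⊆ T j) :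
    ∃ i₀, ∀ i, T i₀ ⊆ T i := by
  choose x N hT using hc
  have hdirN : ∀ i j, ∃ l, N l ≤ N i ∧ N l ≤ N j := by
    intro i j
    obtain ⟨l, hl1, hl2⟩ := hdir i j
    exact ⟨l, coset_dir_le (by rw [← hT l, ← hT i]; exact hl1),
      coset_dir_le (by rw [← hT l, ← hT j]; exact hl2)⟩
  obtain ⟨i₀, hleast⟩ := exists_least_submodule N hdirN
  refine ⟨i₀, fun i => ?_⟩
  obtain ⟨l, hl1, hl2⟩ := hdir i₀ i
  -- N l = N i₀, hence T l = T i₀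
  have hNeq : N l = N i₀ :=
    le_antisymm (coset_dir_le (by rw [← hT l, ← hT i₀]; exact hl1)) (hleast l)
  have hxl : x l - x i₀ ∈ N i₀ := by
    have := hl1 (show x l ∈ T l by rw [hT l]; simp)
    rw [hT i₀] at this; exact this
  intro y hy
  rw [hT i₀] at hy
  have : y - x l ∈ N i₀ := by simpa using N i₀ |>.sub_mem hy hxl
  rw [← hNeq] at this
  exact hl2 (by rw [hT l]; exact this)

end CosetAPI

section TopBasics

variable {k W : Type*} [Field k] [AddCommGroup W] [Module k W] [TopologicalSpace W]
  [IsTopologicalAddGroup W]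

theorem isOpen_of_add_submodule (M : Submodule k W) (hM : IsOpen (M : Set W)) (S : Set W)
    (h : ∀ x ∈ S, ∀ m ∈ M, x + m ∈ S) : IsOpen S := by
  rw [isOpen_iff_mem_nhds]
  intro x hx
  refine Filter.mem_of_superset ((isOpenMap_add_left x _ hM).mem_nhds ⟨0, M.zero_mem, add_zero x⟩) ?_
  rintro _ ⟨m, hm, rfl⟩
  exact h x hx m hm

theorem isClosed_of_isOpen_submodule (M : Submodule k W) (hM : IsOpen (M : Set W)) :
    IsClosed (M : Set W) := by
  rw [← isOpen_compl_iff]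
  refine isOpen_of_add_submodule M hM _ fun x hx m hm hxm => ?_
  exact hx (by simpa using M.sub_mem hxm hm)

theorem quot_isOpen_of_isOpen (M : Submodule k W) (hM : IsOpen (M : Set W))
    (S : Set (W ⧸ M)) : IsOpen S := by
  rw [← M.isQuotientMap_mkQ.isOpen_preimage]
  refine isOpen_of_add_submodule M hM _ fun x hx m hm => ?_
  show Submodule.Quotient.mk (x + m) ∈ S
  rwa [show (Submodule.Quotient.mk (x + m) : W ⧸ M) = Submodule.Quotient.mk x from
    (Submodule.Quotient.eq M).2 (by simpa using hm)]

theorem continuous_of_invariant (M : Submodule k W) (hM : IsOpen (M : Set W))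
    {α : Type*} [TopologicalSpace α] (f : W → α) (hf : ∀ x, ∀ m ∈ M, f (x + m) = f x) :
    Continuous f := by
  rw [continuous_def]
  intro U _
  refine isOpen_of_add_submodule M hM _ fun x hx m hm => ?_
  show f (x + m) ∈ U
  rw [hf x m hm]; exact hx

theorem Cofin.top_mem : (⊤ : Submodule k W) ∈ Cofin k W := by
  refine ⟨by simp, ?_⟩
  have : Subsingleton (W ⧸ (⊤ : Submodule k W)) :=
    Submodule.Quotient.subsingleton_iff.2 rfl
  exact Module.Finite.of_surjective (0 : k →ₗ[k] W ⧸ (⊤ : Submodule k W))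
    (fun y => ⟨0, Subsingleton.elim _ _⟩)

theorem Cofin.inf_mem {A B : Submodule k W} (hA : A ∈ Cofin k W) (hB : B ∈ Cofin k W) :
    A ⊓ B ∈ Cofin k W := by
  refine ⟨hA.1.inter hB.1, ?_⟩
  haveI := hA.2; haveI := hB.2
  have hker : LinearMap.ker (LinearMap.prod A.mkQ B.mkQ) = A ⊓ B := by
    rw [LinearMap.ker_prod, Submodule.ker_mkQ, Submodule.ker_mkQ]
  refine Module.Finite.of_injective
    ((A ⊓ B).liftQ (LinearMap.prod A.mkQ B.mkQ) hker.ge) ?_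
  rw [← LinearMap.ker_eq_bot]
  exact Submodule.ker_liftQ_eq_bot _ _ _ hker.le

theorem Cofin.finset_inf_mem (s : Finset (Cofin k W)) :
    s.inf (fun i => i.1) ∈ Cofin k W := by
  classical
  induction s using Finset.induction_on with
  | empty => simpa using Cofin.top_mem
  | insert _ _ h ih => rw [Finset.inf_insert]; exact Cofin.inf_mem (by exact (Subtype.mem _)) ih

/-- Neighborhoods in a profinite module contain cosets of open cofinite submodules. -/
theorem nhds_basis_cofin (hW : IsProfinite k W) (x : W) {S : Set W} (hS : S ∈ nhds x) :
    ∃ M ∈ Cofin k W, {y | y - x ∈ M} ⊆ S := by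
  -- translate to 0
  have h0 : (x + ·) ⁻¹' S ∈ nhds (0 : W) := by
    rw [← map_add_left_nhds_zero x] at hS
    exact hS
  -- use the inducing property
  rw [hW.1.nhds_eq_comap, Filter.mem_comap] at h0
  obtain ⟨T, hT, hTsub⟩ := h0
  rw [nhds_pi, Filter.mem_pi] at hT
  obtain ⟨I, hIfin, t, ht, hpi⟩ := hT
  refine ⟨hIfin.toFinset.inf (fun i => i.1), Cofin.finset_inf_mem _, ?_⟩
  intro y hy
  have hmem : canonMap k W (y - x) ∈ Set.pi I t := by
    intro i hi
    have hle : hIfin.toFinset.inf (fun i => i.1) ≤ i.1 :=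
      Finset.inf_le ((Set.Finite.mem_toFinset hIfin).2 hi)
    have hyi : y - x ∈ i.1 := hle hy
    have : canonMap k W (y - x) i = canonMap k W 0 i := by
      show (Submodule.Quotient.mk (y - x) : W ⧸ i.1) = Submodule.Quotient.mk 0
      exact (Submodule.Quotient.eq _).2 (by simpa using hyi)
    rw [this]
    exact mem_of_mem_nhds (ht i)
  have := hTsub (hpi hmem)
  simpa using this

theorem eq_zero_of_forall_mem_cofin (hW : IsProfinite k W) {x : W}
    (h : ∀ M : Cofin k W, x ∈ M.1) : x = 0 := by
  have : canonMap k W x = canonMap k W 0 := by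
    funext M
    show (Submodule.Quotient.mk x : W ⧸ M.1) = Submodule.Quotient.mk 0
    exact (Submodule.Quotient.eq _).2 (by simpa using h M)
  exact hW.2.1 this

theorem isClosed_zero_profinite (hW : IsProfinite k W) : IsClosed ({0} : Set W) := by
  have : ({0} : Set W) = ⋂ M : Cofin k W, (M.1 : Set W) := by
    ext x
    simp only [Set.mem_singleton_iff, Set.mem_iInter]
    exact ⟨fun h M => h ▸ M.1.zero_mem, eq_zero_of_forall_mem_cofin hW⟩
  rw [this]
  exact isClosed_iInter fun M => isClosed_of_isOpen_submodule M.1 M.2.1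

/-- If `y` is approximable by `S` modulo every open cofinite submodule and `S` is closed,
then `y ∈ S`. -/
theorem mem_of_forall_approx (hW : IsProfinite k W) {S : Set W} (hS : IsClosed S) {y : W}
    (h : ∀ M : Cofin k W, ∃ s ∈ S, y - s ∈ M.1) : y ∈ S := by
  rw [← hS.closure_eq]
  rw [mem_closure_iff_nhds]
  intro U hU
  obtain ⟨M, hM, hsub⟩ := nhds_basis_cofin hW y hU
  obtain ⟨s, hs, hys⟩ := h ⟨M, hM⟩
  exact ⟨s, hsub (by simp only [Set.mem_setOf_eq]; simpa using M.neg_mem hys), hs⟩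

theorem isClosed_coset {x : W} {N : Submodule k W} (hN : IsClosed (N : Set W)) :
    IsClosed {y | y - x ∈ N} :=
  hN.preimage (continuous_id.sub continuous_const)

end TopBasics

section LC

variable {k W : Type*} [Field k] [AddCommGroup W] [Module k W] [TopologicalSpace W]
  [IsTopologicalAddGroup W]

/-- Transition maps between the discrete quotients. -/
def csMapQ (M M' : Cofin k W) (h : M.1 ≤ M'.1) : (W ⧸ M.1) →ₗ[k] (W ⧸ M'.1) :=
  Submodule.mapQ M.1 M'.1 LinearMap.id (by simpa using h)

theorem csMapQ_mk (M M' : Cofin k W) (h : M.1 ≤ M'.1) (w : W) :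
    csMapQ M M' h (Submodule.Quotient.mk w) = Submodule.Quotient.mk w := by
  simp [csMapQ, Submodule.mapQ_apply]

theorem csMapQ_comp (M M' M'' : Cofin k W) (h1 : M.1 ≤ M'.1) (h2 : M'.1 ≤ M''.1) (z : W ⧸ M.1) :
    csMapQ M' M'' h2 (csMapQ M M' h1 z) = csMapQ M M'' (le_trans h1 h2) z := by
  obtain ⟨w, rfl⟩ := Submodule.Quotient.mk_surjective _ z
  rw [csMapQ_mk, csMapQ_mk, csMapQ_mk]

theorem csMapQ_image_comp (M M' M'' : Cofin k W) (h1 : M.1 ≤ M'.1) (h2 : M'.1 ≤ M''.1)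
    (s : Set (W ⧸ M.1)) :
    csMapQ M' M'' h2 '' (csMapQ M M' h1 '' s) = csMapQ M M'' (le_trans h1 h2) '' s := by
  rw [Set.image_image]
  exact Set.image_congr' fun z => csMapQ_comp M M' M'' h1 h2 z

/-- The fiber of a subset of the total sigma type. -/
def sysFib (G : Set (Σ M : Cofin k W, W ⧸ M.1)) (M : Cofin k W) : Set (W ⧸ M.1) :=
  {z | Sigma.mk M z ∈ G}

/-- A "good" subsystem relative to `A`. -/
def sysGood (A : ∀ M : Cofin k W, Set (W ⧸ M.1)) (G : Set (Σ M : Cofin k W, W ⧸ M.1)) : Prop :=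
  (∀ M, sysFib G M ⊆ A M) ∧ (∀ M, IsCoset k (sysFib G M)) ∧ (∀ M, (sysFib G M).Nonempty) ∧
    (∀ M M' (h : M.1 ≤ M'.1), csMapQ M M' h '' sysFib G M = sysFib G M')

theorem LC_open (hW : IsProfinite k W) {ι : Type*} [Nonempty ι] (S : ι → Set W)
    (hc : ∀ i, ∃ (x : W) (N : Submodule k W), N ∈ Cofin k W ∧ S i = {y | y - x ∈ N})
    (hdir : ∀ i j, ∃ l, S l ⊆ S i ∧ S l ⊆ S j) :
    (⋂ i, S i).Nonempty := by
  classical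
  haveI : Nonempty (Cofin k W) := ⟨⟨⊤, Cofin.top_mem⟩⟩
  choose x N hN hSN using hc
  set B : ι → ∀ M : Cofin k W, Set (W ⧸ M.1) := fun i M => M.1.mkQ '' S i with hBdef
  set A : ∀ M : Cofin k W, Set (W ⧸ M.1) := fun M => ⋂ i, B i M with hAdef
  haveI : ∀ M : Cofin k W, Module.Finite k (W ⧸ M.1) := fun M => M.2.2
  have hBcoset : ∀ i M, IsCoset k (B i M) := by
    intro i M
    have : IsCoset k (S i) := ⟨x i, N i, hSN i⟩
    exact this.image M.1.mkQ
  have hBdir : ∀ (M : Cofin k W) i j, ∃ l, B l M ⊆ B i M ∧ B l M ⊆ B j M := by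
    intro M i j
    obtain ⟨l, h1, h2⟩ := hdir i j
    exact ⟨l, Set.image_mono h1, Set.image_mono h2⟩
  have hAeq : ∀ M, ∃ i₀, A M = B i₀ M := by
    intro M
    obtain ⟨i₀, hle⟩ := exists_least_coset (fun i => B i M) (fun i => hBcoset i M) (hBdir M)
    exact ⟨i₀, subset_antisymm (Set.iInter_subset _ _) (Set.subset_iInter hle)⟩
  have hAcoset : ∀ M, IsCoset k (A M) := by
    intro M; obtain ⟨i₀, h⟩ := hAeq M; rw [h]; exact hBcoset i₀ M
  have himgB : ∀ i (M M' : Cofin k W) (h : M.1 ≤ M'.1), csMapQ M M' h '' B i M = B i M' := by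
    intro i M M' h
    show csMapQ M M' h '' (⇑M.1.mkQ '' S i) = _
    rw [Set.image_image]
    exact Set.image_congr' fun w => by
      rw [Submodule.mkQ_apply, csMapQ_mk, Submodule.mkQ_apply]
  have hAtrans : ∀ (M M' : Cofin k W) (h : M.1 ≤ M'.1), csMapQ M M' h '' A M = A M' := by
    intro M M' h
    refine subset_antisymm ?_ ?_
    · rintro _ ⟨z, hz, rfl⟩
      refine Set.mem_iInter.2 fun i => ?_
      rw [← himgB i M M' h]
      exact ⟨z, Set.iInter_subset _ i hz, rfl⟩
    · obtain ⟨i₀, hAM⟩ := hAeq M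
      intro z hz
      have : z ∈ B i₀ M' := Set.iInter_subset _ i₀ hz
      rw [← himgB i₀ M M' h, ← hAM] at this
      exact this
  -- Zorn's lemma on good subsystems
  have hGoodA : sysGood A {p | p.2 ∈ A p.1} := by
    refine ⟨fun M => le_refl _, fun M => hAcoset M, ?_, ?_⟩
    · intro M; obtain ⟨i₀, h⟩ := hAeq M; rw [show sysFib {p | p.2 ∈ A p.1} M = A M from rfl, h]
      exact (hBcoset i₀ M).nonempty
    · intro M M' h; exact hAtrans M M' h
  have hzorn : ∀ c ⊆ {G | sysGood A G}, IsChain (· ⊆ ·) c →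
      ∃ lb ∈ {G | sysGood A G}, ∀ s ∈ c, lb ⊆ s := by
    intro c hcS hchain
    rcases c.eq_empty_or_nonempty with rfl | hcne
    · exact ⟨{p | p.2 ∈ A p.1}, hGoodA, by simp⟩
    · haveI : Nonempty c := hcne.to_subtype
      have hcd : ∀ G G' : c, ∃ L : c, L.1 ⊆ G.1 ∧ L.1 ⊆ G'.1 := by
        intro G G'
        rcases eq_or_ne G.1 G'.1 with he | hne
        · exact ⟨G, le_refl _, he ▸ le_refl _⟩
        · rcases hchain G.2 G'.2 hne with h | h
          · exact ⟨G, le_refl _, h⟩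
          · exact ⟨G', h, le_refl _⟩
      have hfib : ∀ M, sysFib (⋂₀ c) M = ⋂ G : c, sysFib G.1 M := by
        intro M; ext z
        simp only [sysFib, Set.mem_sInter, Set.mem_setOf_eq, Set.mem_iInter, Subtype.forall]
      have hleast : ∀ M : Cofin k W, ∃ G₀ : c, sysFib (⋂₀ c) M = sysFib G₀.1 M := by
        intro M
        obtain ⟨G₀, hle⟩ := exists_least_coset (fun G : c => sysFib G.1 M)
          (fun G => (hcS G.2).2.1 M) (fun G G' => by
            obtain ⟨L, h1, h2⟩ := hcd G G'
            exact ⟨L, fun z hz => h1 hz, fun z hz => h2 hz⟩)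
        refine ⟨G₀, ?_⟩
        rw [hfib M]
        exact subset_antisymm (Set.iInter_subset _ _) (Set.subset_iInter hle)
      refine ⟨⋂₀ c, ⟨?_, ?_, ?_, ?_⟩, fun s hs => Set.sInter_subset_of_mem hs⟩
      · intro M
        obtain ⟨G₀, h⟩ := hleast M
        rw [h]; exact (hcS G₀.2).1 M
      · intro M
        obtain ⟨G₀, h⟩ := hleast M
        rw [h]; exact (hcS G₀.2).2.1 M
      · intro M
        obtain ⟨G₀, h⟩ := hleast M
        rw [h]; exact (hcS G₀.2).2.2.1 M
      · intro M M' h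
        refine subset_antisymm ?_ ?_
        · rintro _ ⟨z, hz, rfl⟩
          rw [hfib M'] at *
          refine Set.mem_iInter.2 fun G => ?_
          rw [← (hcS G.2).2.2.2 M M' h]
          exact ⟨z, (hfib M ▸ hz : z ∈ ⋂ G : c, sysFib G.1 M) |> Set.mem_iInter.1 <| G, rfl⟩
        · intro z hz
          -- lift along the directed chain
          have hDcoset : ∀ G : c, IsCoset k (sysFib G.1 M ∩ (csMapQ M M' h) ⁻¹' {z}) := by
            intro G
            have hne2 : (sysFib G.1 M ∩ (csMapQ M M' h) ⁻¹' {z}).Nonempty := by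
              have : z ∈ sysFib G.1 M' := (hfib M' ▸ hz : z ∈ ⋂ G : c, sysFib G.1 M')
                |> Set.mem_iInter.1 <| G
              rw [← (hcS G.2).2.2.2 M M' h] at this
              obtain ⟨y, hy, hyz⟩ := this
              exact ⟨y, hy, by simpa using hyz⟩
            have hne3 := hne2
            obtain ⟨y₀, _, hy₀⟩ := hne3
            exact ((hcS G.2).2.1 M).inter
              (isCoset_fiber (csMapQ M M' h) (by simpa using hy₀)) hne2
          obtain ⟨G₀, hle⟩ := exists_least_coset
            (fun G : c => sysFib G.1 M ∩ (csMapQ M M' h) ⁻¹' {z}) hDcoset (fun G G' => by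
              obtain ⟨L, h1, h2⟩ := hcd G G'
              exact ⟨L, Set.inter_subset_inter_left _ (fun u hu => h1 hu),
                Set.inter_subset_inter_left _ (fun u hu => h2 hu)⟩)
          obtain ⟨y, hy1, hy2⟩ := (hDcoset G₀).nonempty
          refine ⟨y, ?_, by simpa using hy2⟩
          rw [hfib M]
          exact Set.mem_iInter.2 fun G => (hle G ⟨hy1, hy2⟩).1
  obtain ⟨m, hmin⟩ := zorn_superset {G | sysGood A G} hzorn
  -- the minimal system has singleton fibers
  have hmGood : sysGood A m := hmin.prop
  have hsing : ∀ (M : Cofin k W), ∀ a ∈ sysFib m M, ∀ b ∈ sysFib m M, a = b := by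
    intro M₀ a ha b hb
    by_contra hab
    set inf : Cofin k W → Cofin k W := fun M => ⟨M.1 ⊓ M₀.1, Cofin.inf_mem M.2 M₀.2⟩ with hinf
    have hinf_le_left : ∀ M, (inf M).1 ≤ M.1 := fun M => inf_le_left
    have hinf_le_right : ∀ M, (inf M).1 ≤ M₀.1 := fun M => inf_le_right
    set E : ∀ M : Cofin k W, Set (W ⧸ (inf M).1) := fun M =>
      sysFib m (inf M) ∩ (csMapQ (inf M) M₀ (hinf_le_right M)) ⁻¹' {a} with hEdef
    have hEne : ∀ M, (E M).Nonempty := by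
      intro M
      have : a ∈ sysFib m M₀ := ha
      rw [← hmGood.2.2.2 (inf M) M₀ (hinf_le_right M)] at this
      obtain ⟨y, hy, hyz⟩ := this
      exact ⟨y, hy, by simpa using hyz⟩
    have hEcoset : ∀ M, IsCoset k (E M) := by
      intro M
      obtain ⟨y₀, _, hy₀⟩ := hEne M
      exact (hmGood.2.1 (inf M)).inter
        (isCoset_fiber (csMapQ (inf M) M₀ (hinf_le_right M)) (by simpa using hy₀)) (hEne M)
    have hEtrans : ∀ (M M' : Cofin k W) (h : M.1 ≤ M'.1),
        csMapQ (inf M) (inf M') (inf_le_inf_right _ h) '' E M = E M' := by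
      intro M M' h
      refine subset_antisymm ?_ ?_
      · rintro _ ⟨y, ⟨hy1, hy2⟩, rfl⟩
        constructor
        · rw [← hmGood.2.2.2 (inf M) (inf M') (inf_le_inf_right _ h)]
          exact ⟨y, hy1, rfl⟩
        · show csMapQ (inf M') M₀ (hinf_le_right M') _ = a
          rw [csMapQ_comp]
          simpa using hy2
      · rintro y' ⟨hy1, hy2⟩
        have : y' ∈ csMapQ (inf M) (inf M') (inf_le_inf_right _ h) '' sysFib m (inf M) := by
          rw [hmGood.2.2.2 (inf M) (inf M') (inf_le_inf_right _ h)]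
          exact hy1
        obtain ⟨y, hy, rfl⟩ := this
        refine ⟨y, ⟨hy, ?_⟩, rfl⟩
        show csMapQ (inf M) M₀ (hinf_le_right M) y = a
        rw [← csMapQ_comp (inf M) (inf M') M₀ (inf_le_inf_right _ h) (hinf_le_right M')]
        simpa using hy2
    set m' : Set (Σ M : Cofin k W, W ⧸ M.1) :=
      {p | p.2 ∈ csMapQ (inf p.1) p.1 (hinf_le_left p.1) '' E p.1} with hm'def
    have hfibm' : ∀ M, sysFib m' M = csMapQ (inf M) M (hinf_le_left M) '' E M := fun M => rfl
    have hm'sub : ∀ M, sysFib m' M ⊆ sysFib m M := by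
      intro M
      rw [hfibm' M, ← hmGood.2.2.2 (inf M) M (hinf_le_left M)]
      exact Set.image_mono Set.inter_subset_left
    have hm'Good : sysGood A m' := by
      refine ⟨fun M => (hm'sub M).trans (hmGood.1 M), ?_, ?_, ?_⟩
      · intro M; rw [hfibm' M]; exact (hEcoset M).image _
      · intro M; rw [hfibm' M]; exact (hEne M).image _
      · intro M M' h
        rw [hfibm' M, hfibm' M', ← hEtrans M M' h]
        rw [csMapQ_image_comp, csMapQ_image_comp]
    have hmm' : m ⊆ m' := hmin.2 hm'Good (fun p hp => hm'sub p.1 hp)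
    have hbm' : b ∈ sysFib m' M₀ := hmm' hb
    rw [hfibm' M₀] at hbm'
    obtain ⟨y, ⟨_, hy2⟩, rfl⟩ := hbm'
    exact hab ((by simpa using hy2 : csMapQ (inf M₀) M₀ (hinf_le_left M₀) y = a)).symm
  -- extract the compatible family
  have hf : ∀ M, (sysFib m M).Nonempty := hmGood.2.2.1
  set f : ∀ M : Cofin k W, W ⧸ M.1 := fun M => (hf M).choose with hfdef
  have hfmem : ∀ M, f M ∈ sysFib m M := fun M => (hf M).choose_spec
  have hflim : f ∈ cofinLimit k W := by
    intro M₁ M₂ h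
    have : csMapQ M₁ M₂ h (f M₁) ∈ sysFib m M₂ := by
      rw [← hmGood.2.2.2 M₁ M₂ h]
      exact ⟨f M₁, hfmem M₁, rfl⟩
    exact hsing M₂ _ this _ (hfmem M₂)
  rw [← hW.2.2] at hflim
  obtain ⟨w, hw⟩ := hflim
  refine ⟨w, Set.mem_iInter.2 fun i => ?_⟩
  have hwm : canonMap k W w ⟨N i, hN i⟩ ∈ sysFib m ⟨N i, hN i⟩ := by
    rw [hw]; exact hfmem _
  have : canonMap k W w ⟨N i, hN i⟩ ∈ B i ⟨N i, hN i⟩ :=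
    Set.iInter_subset _ i (hmGood.1 _ hwm)
  obtain ⟨s, hs, hsw⟩ := this
  have hws : w - s ∈ N i := by
    rw [← Submodule.Quotient.eq (p := N i)]
    rw [← Submodule.mkQ_apply, ← Submodule.mkQ_apply] at *
    exact hsw.symm
  rw [hSN i] at hs ⊢
  have : w - x i = (w - s) + (s - x i) := by abel
  rw [Set.mem_setOf_eq, this]
  exact (N i).add_mem hws hs

/-- Linear compactness: a directed family of nonempty cosets of closed submodules in a
profinite module has nonempty intersection. -/
theorem LC (hW : IsProfinite k W) {ι : Type*} [Nonempty ι] (S : ι → Set W)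
    (hc : ∀ i, ∃ (x : W) (N : Submodule k W), IsClosed (N : Set W) ∧ S i = {y | y - x ∈ N})
    (hdir : ∀ i j, ∃ l, S l ⊆ S i ∧ S l ⊆ S j) :
    (⋂ i, S i).Nonempty := by
  classical
  haveI : Nonempty (Cofin k W) := ⟨⟨⊤, Cofin.top_mem⟩⟩
  choose x N hNc hSN using hc
  set S' : ι × Cofin k W → Set W := fun p => {y | ∃ s ∈ S p.1, y - s ∈ p.2.1} with hS'def
  have hS'coset : ∀ p : ι × Cofin k W, ∃ (z : W) (P : Submodule k W),
      P ∈ Cofin k W ∧ S' p = {y | y - z ∈ P} := by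
    rintro ⟨i, M⟩
    refine ⟨x i, N i ⊔ M.1, ⟨?_, ?_⟩, ?_⟩
    · exact isOpen_of_add_submodule M.1 M.2.1 _ fun u hu v hv =>
        (N i ⊔ M.1).add_mem hu (Submodule.mem_sup_right hv)
    · haveI := M.2.2
      refine Module.Finite.of_surjective (Submodule.mapQ M.1 (N i ⊔ M.1) LinearMap.id
        (by simpa using le_sup_right)) (fun z => ?_)
      obtain ⟨w, rfl⟩ := Submodule.Quotient.mk_surjective _ z
      exact ⟨Submodule.Quotient.mk w, by simp [Submodule.mapQ_apply]⟩
    · ext y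
      simp only [hS'def, Set.mem_setOf_eq]
      constructor
      · rintro ⟨s, hs, hys⟩
        rw [hSN i] at hs
        have : y - x i = (y - s) + (s - x i) := by abel
        rw [this]
        exact Submodule.add_mem _ (Submodule.mem_sup_right hys) (Submodule.mem_sup_left hs)
      · intro hy
        obtain ⟨n, hn, v, hv, hnv⟩ := Submodule.mem_sup.1 hy
        refine ⟨x i + n, ?_, ?_⟩
        · rw [hSN i]; simpa using hn
        · have h' : y - (x i + n) = (y - x i) - n := by abel
          have : y - (x i + n) = v := by rw [h', ← hnv]; abel
          rw [this]; exact hv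
  have hS'dir : ∀ p q, ∃ r, S' r ⊆ S' p ∧ S' r ⊆ S' q := by
    rintro ⟨i, M⟩ ⟨j, M'⟩
    obtain ⟨l, h1, h2⟩ := hdir i j
    refine ⟨⟨l, ⟨M.1 ⊓ M'.1, Cofin.inf_mem M.2 M'.2⟩⟩, ?_, ?_⟩
    · rintro y ⟨s, hs, hys⟩; exact ⟨s, h1 hs, hys.1⟩
    · rintro y ⟨s, hs, hys⟩; exact ⟨s, h2 hs, hys.2⟩
  obtain ⟨w, hw⟩ := LC_open hW S' hS'coset hS'dir
  refine ⟨w, Set.mem_iInter.2 fun i => ?_⟩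
  have hSc : IsClosed (S i) := by rw [hSN i]; exact isClosed_coset (hNc i)
  refine mem_of_forall_approx hW hSc fun M => ?_
  have := Set.mem_iInter.1 hw ⟨i, M⟩
  obtain ⟨s, hs, hws⟩ := this
  exact ⟨s, hs, hws⟩

end LC

section Apps

variable {k W W' : Type*} [Field k] [AddCommGroup W] [Module k W] [TopologicalSpace W]
  [IsTopologicalAddGroup W] [AddCommGroup W'] [Module k W'] [TopologicalSpace W']
  [IsTopologicalAddGroup W']

/-- The image of a closed submodule under a continuous linear map between profinite
modules is closed. -/
theorem image_closed (hW : IsProfinite k W) (hW' : IsProfinite k W')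
    (φ : W →ₗ[k] W') (hφ : Continuous φ) (P : Submodule k W) (hP : IsClosed (P : Set W)) :
    IsClosed (φ '' (P : Set W)) := by
  haveI : Nonempty (Cofin k W') := ⟨⟨⊤, Cofin.top_mem⟩⟩
  refine isClosed_of_closure_subset fun y hy => ?_
  rw [mem_closure_iff_nhds] at hy
  set T : Cofin k W' → Set W := fun V => {w | w ∈ P ∧ φ w - y ∈ V.1} with hT
  have hne : ∀ V, (T V).Nonempty := by
    intro V
    obtain ⟨z, hz1, p, hp, rfl⟩ := hy {z | z - y ∈ V.1}
      (IsOpen.mem_nhds (V.2.1.preimage (continuous_id.sub continuous_const)) (by simp))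
    exact ⟨p, hp, hz1⟩
  have hcoset : ∀ V, ∃ (x : W) (N : Submodule k W), IsClosed (N : Set W) ∧
      T V = {w | w - x ∈ N} := by
    intro V
    obtain ⟨w₀, hw₀P, hw₀V⟩ := hne V
    refine ⟨w₀, P ⊓ Submodule.comap φ V.1, ?_, ?_⟩
    · exact IsClosed.inter hP ((isClosed_of_isOpen_submodule V.1 V.2.1).preimage hφ)
    · ext w
      simp only [hT, Set.mem_setOf_eq, Submodule.mem_inf, Submodule.mem_comap, map_sub]
      constructor
      · rintro ⟨h1, h2⟩
        refine ⟨P.sub_mem h1 hw₀P, ?_⟩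
        have he : φ w - φ w₀ = (φ w - y) - (φ w₀ - y) := by abel
        rw [he]; exact V.1.sub_mem h2 hw₀V
      · rintro ⟨h1, h2⟩
        refine ⟨by simpa using P.add_mem h1 hw₀P, ?_⟩
        have he : φ w - y = (φ w - φ w₀) + (φ w₀ - y) := by abel
        rw [he]; exact V.1.add_mem h2 hw₀V
  have hdir : ∀ V V', ∃ L, T L ⊆ T V ∧ T L ⊆ T V' := by
    intro V V'
    refine ⟨⟨V.1 ⊓ V'.1, Cofin.inf_mem V.2 V'.2⟩, ?_, ?_⟩
    · rintro w ⟨h1, h2⟩; exact ⟨h1, h2.1⟩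
    · rintro w ⟨h1, h2⟩; exact ⟨h1, h2.2⟩
  obtain ⟨w, hw⟩ := LC hW T hcoset hdir
  have hwP : w ∈ P := (Set.mem_iInter.1 hw ⟨⊤, Cofin.top_mem⟩).1
  have hz : φ w - y = 0 := eq_zero_of_forall_mem_cofin hW' fun V => (Set.mem_iInter.1 hw V).2
  exact ⟨w, hwP, by rwa [sub_eq_zero] at hz⟩

/-- A closed cofinite submodule of a profinite module is open. -/
theorem open_of_closed_cofinite (hW : IsProfinite k W) (T : Submodule k W)
    (hTc : IsClosed (T : Set W)) (hTf : Module.Finite k (W ⧸ T)) : IsOpen (T : Set W) := by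
  haveI : Nonempty (Cofin k W) := ⟨⟨⊤, Cofin.top_mem⟩⟩
  haveI := hTf
  set K : Cofin k W → Submodule k (W ⧸ T) := fun V => Submodule.map T.mkQ V.1 with hK
  obtain ⟨V₀, hleast⟩ := exists_least_submodule K (fun V V' =>
    ⟨⟨V.1 ⊓ V'.1, Cofin.inf_mem V.2 V'.2⟩, Submodule.map_mono inf_le_left,
      Submodule.map_mono inf_le_right⟩)
  have hV₀T : ∀ u ∈ V₀.1, u ∈ T := by
    intro u hu
    have hKu : ∀ M : Cofin k W, T.mkQ u ∈ K M := fun M => hleast M ⟨u, hu, rfl⟩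
    refine mem_of_forall_approx hW hTc fun M => ?_
    obtain ⟨v, hv, hveq⟩ := hKu M
    have hvu : u - v ∈ T := by
      rw [← Submodule.Quotient.eq (p := T)]
      rw [← Submodule.mkQ_apply, ← Submodule.mkQ_apply]
      exact hveq.symm
    refine ⟨u - v, hvu, ?_⟩
    have he : u - (u - v) = v := by abel
    rw [he]; exact hv
  refine isOpen_of_add_submodule V₀.1 V₀.2.1 _ fun t ht u hu => T.add_mem ht (hV₀T u hu)

/-- Open mapping: the image of an open cofinite submodule (intersected with a closed
submodule mapping onto the target) is open. -/
theorem image_inf_open (hW : IsProfinite k W) (hW' : IsProfinite k W')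
    (φ : W →ₗ[k] W') (hφ : Continuous φ) (D : Submodule k W) (hD : IsClosed (D : Set W))
    (hsurj : ∀ y, ∃ d ∈ D, φ d = y) {M : Submodule k W} (hM : M ∈ Cofin k W) :
    IsOpen (φ '' ((M ⊓ D : Submodule k W) : Set W)) := by
  have hclosed : IsClosed (φ '' ((M ⊓ D : Submodule k W) : Set W)) :=
    image_closed hW hW' φ hφ _ ((isClosed_of_isOpen_submodule M hM.1).inter hD)
  have himg : ((Submodule.map φ (M ⊓ D) : Submodule k W') : Set W') =
      φ '' ((M ⊓ D : Submodule k W) : Set W) := Submodule.map_coe _ _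
  haveI : Module.Finite k (W ⧸ M) := hM.2
  set A : Submodule k D := Submodule.comap D.subtype M with hA
  -- injectivity into W ⧸ M gives finiteness of D ⧸ A
  set θ : (D ⧸ A) →ₗ[k] (W ⧸ M) := A.liftQ (M.mkQ.comp D.subtype)
    (fun a ha => by
      simp only [LinearMap.mem_ker, LinearMap.comp_apply, Submodule.mkQ_apply,
        Submodule.Quotient.mk_eq_zero]
      exact ha) with hθ
  have hθinj : Function.Injective θ := by
    rw [← LinearMap.ker_eq_bot]
    refine Submodule.ker_liftQ_eq_bot _ _ _ fun key hkey => ?_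
    simp only [LinearMap.mem_ker, LinearMap.comp_apply, Submodule.mkQ_apply,
      Submodule.Quotient.mk_eq_zero] at hkey
    exact hkey
  haveI : IsNoetherian k (W ⧸ M) := IsNoetherian.iff_fg.2 inferInstance
  haveI : Module.Finite k (D ⧸ A) := Module.Finite.of_injective θ hθinj
  -- surjectivity onto W' ⧸ T gives finiteness of the quotient
  set T : Submodule k W' := Submodule.map φ (M ⊓ D) with hTdef
  set ψ : (D ⧸ A) →ₗ[k] (W' ⧸ T) := A.liftQ (T.mkQ.comp (φ.comp D.subtype))
    (fun a ha => by
      simp only [LinearMap.mem_ker, LinearMap.comp_apply, Submodule.mkQ_apply,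
        Submodule.Quotient.mk_eq_zero]
      exact Submodule.mem_map_of_mem ⟨ha, a.2⟩) with hψ
  have hψsurj : Function.Surjective ψ := by
    intro z
    obtain ⟨y, rfl⟩ := Submodule.Quotient.mk_surjective _ z
    obtain ⟨d, hd, rfl⟩ := hsurj y
    refine ⟨Submodule.Quotient.mk ⟨d, hd⟩, ?_⟩
    rw [hψ, Submodule.liftQ_apply]
    rfl
  haveI : Module.Finite k (W' ⧸ T) := Module.Finite.of_surjective ψ hψsurj
  rw [← himg]
  exact open_of_closed_cofinite hW' T (by rw [himg]; exact hclosed) inferInstance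

/-- Strictness for injections: open cofinite submodules are induced from the target. -/
theorem exists_comap_le (hW : IsProfinite k W) (hW' : IsProfinite k W')
    (φ : W →ₗ[k] W') (hφ : Continuous φ) (hinj : Function.Injective φ)
    {M : Submodule k W} (hM : M ∈ Cofin k W) :
    ∃ V ∈ Cofin k W', Submodule.comap φ V ≤ M := by
  haveI : Nonempty (Cofin k W') := ⟨⟨⊤, Cofin.top_mem⟩⟩
  haveI : Module.Finite k (W ⧸ M) := hM.2
  have hMc : IsClosed (M : Set W) := isClosed_of_isOpen_submodule M hM.1
  have himgcl : IsClosed (φ '' (M : Set W)) := image_closed hW hW' φ hφ M hMc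
  set K : Cofin k W' → Submodule k (W ⧸ M) := fun V =>
    Submodule.map M.mkQ (Submodule.comap φ V.1) with hK
  obtain ⟨V₀, hleast⟩ := exists_least_submodule K (fun V V' =>
    ⟨⟨V.1 ⊓ V'.1, Cofin.inf_mem V.2 V'.2⟩,
      Submodule.map_mono (Submodule.comap_mono inf_le_left),
      Submodule.map_mono (Submodule.comap_mono inf_le_right)⟩)
  refine ⟨V₀.1, V₀.2, fun u hu => ?_⟩
  have hKmem : ∀ V : Cofin k W', M.mkQ u ∈ K V := fun V => hleast V ⟨u, hu, rfl⟩
  have hmem : φ u ∈ φ '' (M : Set W) := by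
    refine mem_of_forall_approx hW' himgcl fun V => ?_
    obtain ⟨z, hz, hzeq⟩ := hKmem V
    have hzu : u - z ∈ M := by
      rw [← Submodule.Quotient.eq (p := M)]
      rw [← Submodule.mkQ_apply, ← Submodule.mkQ_apply]
      exact hzeq.symm
    refine ⟨φ (u - z), ⟨u - z, hzu, rfl⟩, ?_⟩
    rw [map_sub]
    simpa using hz
  obtain ⟨mm, hmm, heq⟩ := hmem
  have : mm = u := hinj heq
  rwa [← this]

/-- Separation: a closed submodule avoiding a point can be separated by a continuous
functional. -/
theorem exists_functional [TopologicalSpace k] (hW : IsProfinite k W)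
    (R : Submodule k W) (hR : IsClosed (R : Set W)) {y : W} (hy : y ∉ R) :
    ∃ f : W →ₗ[k] k, Continuous f ∧ (∀ r ∈ R, f r = 0) ∧ f y = 1 := by
  have hyc : (R : Set W)ᶜ ∈ nhds y := hR.isOpen_compl.mem_nhds hy
  obtain ⟨V, hV, hsub⟩ := nhds_basis_cofin hW y hyc
  set Rbar : Submodule k (W ⧸ (V : Submodule k W)) := Submodule.map
    (Submodule.mkQ (V : Submodule k W)) R with hRbar
  have hynot : Submodule.mkQ (V : Submodule k W) y ∉ Rbar := by
    rintro ⟨r, hr, hreq⟩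
    have hrv : r - y ∈ (V : Submodule k W) := by
      rw [← Submodule.Quotient.eq (p := (V : Submodule k W))]
      rw [← Submodule.mkQ_apply, ← Submodule.mkQ_apply]
      exact hreq
    exact hsub (show r ∈ {z | z - y ∈ (V : Submodule k W)} from hrv) hr
  have hne : Rbar.mkQ (Submodule.mkQ (V : Submodule k W) y) ≠ 0 := by
    rw [Submodule.mkQ_apply, ne_eq, Submodule.Quotient.mk_eq_zero]
    exact hynot
  obtain ⟨ℓ, hℓ⟩ : ∃ ℓ : (((W ⧸ (V : Submodule k W)) ⧸ Rbar)) →ₗ[k] k,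
      ℓ (Rbar.mkQ (Submodule.mkQ (V : Submodule k W) y)) ≠ 0 := by
    by_contra hcon
    push_neg at hcon
    exact hne ((Module.forall_dual_apply_eq_zero_iff k _).1 hcon)
  set c : k := ℓ (Rbar.mkQ (Submodule.mkQ (V : Submodule k W) y)) with hc
  refine ⟨(c⁻¹ • ℓ).comp (Rbar.mkQ.comp (Submodule.mkQ (V : Submodule k W))), ?_, ?_, ?_⟩
  · refine continuous_of_invariant (V : Submodule k W) hV.1 _ fun x m hm => ?_
    have hm0 : (V : Submodule k W).mkQ m = 0 := by
      rw [Submodule.mkQ_apply, Submodule.Quotient.mk_eq_zero]; exact hm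
    have hq : (V : Submodule k W).mkQ (x + m) = (V : Submodule k W).mkQ x := by
      rw [map_add, hm0, add_zero]
    simp only [LinearMap.comp_apply, hq]
  · intro r hr
    simp only [LinearMap.comp_apply, LinearMap.smul_apply]
    rw [show Rbar.mkQ (Submodule.mkQ (V : Submodule k W) r) = 0 from
      (Submodule.Quotient.mk_eq_zero _).2 (Submodule.mem_map_of_mem hr), map_zero, smul_zero]
  · show (c⁻¹ • ℓ) (Rbar.mkQ (Submodule.mkQ (V : Submodule k W) y)) = 1
    rw [LinearMap.smul_apply, ← hc, smul_eq_mul]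
    exact inv_mul_cancel₀ hℓ

/-- A closed submodule of a profinite module admits a closed complement. -/
theorem exists_closed_compl (hW : IsProfinite k W) (N : Submodule k W)
    (hN : IsClosed (N : Set W)) :
    ∃ D : Submodule k W, IsClosed (D : Set W) ∧ D ⊓ N = ⊥ ∧ D ⊔ N = ⊤ := by
  set s : Set (Submodule k W) := {D | IsClosed (D : Set W) ∧ D ⊔ N = ⊤} with hs
  have hzorn : ∀ c ⊆ s, IsChain (· ≤ ·) c → ∃ lb ∈ s, ∀ z ∈ c, lb ≤ z := by
    intro c hcs hchain
    rcases c.eq_empty_or_nonempty with rfl | hcne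
    · exact ⟨⊤, ⟨by simp, by simp⟩, by simp⟩
    haveI : Nonempty c := hcne.to_subtype
    refine ⟨sInf c, ⟨?_, ?_⟩, fun z hz => sInf_le hz⟩
    · have hset : ((sInf c : Submodule k W) : Set W) = ⋂ D ∈ c, (D : Set W) := by
        rw [Submodule.coe_sInf]
      rw [hset]
      exact isClosed_biInter fun D hD => (hcs hD).1
    · rw [eq_top_iff]
      intro w _
      set T : c → Set W := fun D => (D.1 : Set W) ∩ {z | z - w ∈ N} with hT
      have hne : ∀ D : c, (T D).Nonempty := by
        intro D
        have : w ∈ D.1 ⊔ N := by rw [(hcs D.2).2]; trivial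
        obtain ⟨d, hd, n, hn, hdn⟩ := Submodule.mem_sup.1 this
        refine ⟨d, hd, ?_⟩
        have he : d - w = -n := by rw [← hdn]; abel
        rw [Set.mem_setOf_eq, he]
        exact N.neg_mem hn
      have hcoset : ∀ D : c, ∃ (x : W) (P : Submodule k W), IsClosed (P : Set W) ∧
          T D = {z | z - x ∈ P} := by
        intro D
        obtain ⟨d₀, hd₀D, hd₀N⟩ := hne D
        refine ⟨d₀, D.1 ⊓ N, IsClosed.inter (hcs D.2).1 hN, ?_⟩
        ext z
        simp only [hT, Set.mem_inter_iff, Set.mem_setOf_eq, SetLike.mem_coe,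
          Submodule.mem_inf]
        constructor
        · rintro ⟨h1, h2⟩
          exact ⟨D.1.sub_mem h1 hd₀D, by
            have he : z - d₀ = (z - w) - (d₀ - w) := by abel
            rw [he]; exact N.sub_mem h2 hd₀N⟩
        · rintro ⟨h1, h2⟩
          refine ⟨by simpa using D.1.add_mem h1 hd₀D, ?_⟩
          have he : z - w = (z - d₀) + (d₀ - w) := by abel
          show z - w ∈ N
          rw [he]
          exact N.add_mem h2 hd₀N
      have hdir : ∀ D D' : c, ∃ L, T L ⊆ T D ∧ T L ⊆ T D' := by
        intro D D'
        rcases eq_or_ne D.1 D'.1 with he | hne'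
        · exact ⟨D, le_refl _, by rw [hT]; simp only [he]; exact le_refl _⟩
        rcases hchain D.2 D'.2 hne' with h | h
        · exact ⟨D, le_refl _, Set.inter_subset_inter_left _ h⟩
        · exact ⟨D', Set.inter_subset_inter_left _ h, le_refl _⟩
      obtain ⟨z, hz⟩ := LC hW T hcoset hdir
      obtain ⟨D₀, hD₀⟩ := hcne
      have hzN : z - w ∈ N := (Set.mem_iInter.1 hz ⟨D₀, hD₀⟩).2
      have hwzN : w - z ∈ N := by
        have := N.neg_mem hzN; simpa using this
      refine Submodule.mem_sup.2 ⟨z, ?_, w - z, hwzN, by abel⟩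
      exact Submodule.mem_sInf.2 fun D hD => (Set.mem_iInter.1 hz ⟨D, hD⟩).1
  obtain ⟨D, hDs, hDmin⟩ : ∃ D, D ∈ s ∧ ∀ y ∈ s, y ≤ D → D ≤ y := by
    obtain ⟨m, hm⟩ := @zorn_le₀ (Submodule k W)ᵒᵈ _ s (by
      intro c hcs hchain
      obtain ⟨lb, hlb, h⟩ := hzorn c hcs hchain.symm
      exact ⟨lb, hlb, h⟩)
    exact ⟨m, hm.1, fun y hy hle => hm.2 hy hle⟩
  refine ⟨D, hDs.1, ?_, hDs.2⟩
  by_contra hbot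
  obtain ⟨xx, hxx, hxx0⟩ := (Submodule.ne_bot_iff _).1 hbot
  have hsep : ∃ V : Cofin k W, xx ∉ V.1 := by
    by_contra hcon; push_neg at hcon
    exact hxx0 (eq_zero_of_forall_mem_cofin hW hcon)
  obtain ⟨V, hxV⟩ := hsep
  have hxbar : V.1.mkQ xx ≠ 0 := by
    rw [Submodule.mkQ_apply, ne_eq, Submodule.Quotient.mk_eq_zero]
    exact hxV
  obtain ⟨H, hH⟩ := Submodule.exists_isCompl (Submodule.span k {V.1.mkQ xx})
  set D' : Submodule k W := D ⊓ Submodule.comap V.1.mkQ H with hD'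
  have hxxD : xx ∈ D := (Submodule.mem_inf.1 hxx).1
  have hxxN : xx ∈ N := (Submodule.mem_inf.1 hxx).2
  have hD'closed : IsClosed (D' : Set W) := by
    have hset : (D' : Set W) = (D : Set W) ∩ (⇑V.1.mkQ ⁻¹' (H : Set (W ⧸ V.1))) := rfl
    rw [hset]
    refine hDs.1.inter (IsClosed.preimage ?_ ?_)
    · exact continuous_quot_mk
    · rw [← isOpen_compl_iff]
      exact quot_isOpen_of_isOpen V.1 V.2.1 _
  have hD'sup : D' ⊔ N = ⊤ := by
    rw [eq_top_iff, ← hDs.2]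
    refine sup_le ?_ le_sup_right
    intro d hd
    have hmem : V.1.mkQ d ∈ Submodule.span k {V.1.mkQ xx} ⊔ H := by
      rw [hH.sup_eq_top]; trivial
    obtain ⟨u, hu, v, hv, huv⟩ := Submodule.mem_sup.1 hmem
    obtain ⟨c, rfl⟩ := Submodule.mem_span_singleton.1 hu
    refine Submodule.mem_sup.2 ⟨d - c • xx, ⟨?_, ?_⟩, c • xx, N.smul_mem c hxxN, by abel⟩
    · exact D.sub_mem hd (D.smul_mem c hxxD)
    · show V.1.mkQ (d - c • xx) ∈ H
      rw [map_sub, map_smul, ← huv]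
      simpa using hv
  have hle : D ≤ D' := hDmin D' ⟨hD'closed, hD'sup⟩ inf_le_left
  have hxH : V.1.mkQ xx ∈ H := (Submodule.mem_inf.1 (hle hxxD)).2
  exact hxbar (Submodule.disjoint_def.1 hH.disjoint _
    (Submodule.mem_span_singleton_self _) hxH)

/-- A continuous linear surjection between profinite modules admits a continuous
linear section. -/
theorem exists_section (hW : IsProfinite k W) (hW' : IsProfinite k W')
    (φ : W →ₗ[k] W') (hφ : Continuous φ) (hsurj : Function.Surjective φ) :
    ∃ s : W' →ₗ[k] W, Continuous s ∧ φ.comp s = LinearMap.id := by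
  have hNc : IsClosed ((LinearMap.ker φ : Submodule k W) : Set W) := by
    have hset : ((LinearMap.ker φ : Submodule k W) : Set W) = ⇑φ ⁻¹' {0} := by
      ext z; simp [LinearMap.mem_ker]
    rw [hset]
    exact (isClosed_zero_profinite hW').preimage hφ
  obtain ⟨D, hDc, hDinf, hDsup⟩ := exists_closed_compl hW (LinearMap.ker φ) hNc
  have hinjD : ∀ d : W, d ∈ D → φ d = 0 → d = 0 := by
    intro d hd h0
    have : d ∈ D ⊓ LinearMap.ker φ := ⟨hd, h0⟩
    rw [hDinf] at this
    simpa using this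
  have hsurjD : ∀ y, ∃ d ∈ D, φ d = y := by
    intro y
    obtain ⟨w, rfl⟩ := hsurj y
    have : w ∈ D ⊔ LinearMap.ker φ := by rw [hDsup]; trivial
    obtain ⟨d, hd, n, hn, hdn⟩ := Submodule.mem_sup.1 this
    refine ⟨d, hd, ?_⟩
    rw [← hdn, map_add, (LinearMap.mem_ker).1 hn, add_zero]
  set g : D →ₗ[k] W' := φ.comp D.subtype with hg
  have hgbij : Function.Bijective g := by
    constructor
    · intro a b hab
      have h0 : φ ((a - b : D) : W) = 0 := by
        have : g (a - b) = 0 := by rw [map_sub, hab, sub_self]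
        simpa [hg] using this
      have := hinjD _ (a - b : D).2 h0
      have hab' : (a - b : D) = 0 := by exact Subtype.ext this
      exact sub_eq_zero.1 (by simpa using hab')
    · intro y
      obtain ⟨d, hd, hdy⟩ := hsurjD y
      exact ⟨⟨d, hd⟩, hdy⟩
  set e := LinearEquiv.ofBijective g hgbij with he
  set sfun : W' →ₗ[k] W := D.subtype.comp (e.symm : W' ≃ₗ[k] D).toLinearMap with hsfun
  have hsec : ∀ y, φ (sfun y) = y := by
    intro y
    have h1 : e (e.symm y) = y := e.apply_symm_apply y
    rw [he, LinearEquiv.ofBijective_apply] at h1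
    exact h1
  have hsfunD : ∀ y, sfun y ∈ D := fun y => (e.symm y).2
  refine ⟨sfun, ?_, LinearMap.ext fun y => hsec y⟩
  rw [continuous_def]
  intro S hS
  rw [isOpen_iff_mem_nhds]
  intro y hy
  obtain ⟨M, hM, hsub⟩ := nhds_basis_cofin hW (sfun y) (hS.mem_nhds hy)
  have hopen : IsOpen (φ '' ((M ⊓ D : Submodule k W) : Set W)) :=
    image_inf_open hW hW' φ hφ D hDc hsurjD hM
  have hOopen : IsOpen {z : W' | z - y ∈ φ '' ((M ⊓ D : Submodule k W) : Set W)} :=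
    hopen.preimage (continuous_id.sub continuous_const)
  have hyO : y ∈ {z : W' | z - y ∈ φ '' ((M ⊓ D : Submodule k W) : Set W)} := by
    refine ⟨0, Submodule.zero_mem _, ?_⟩
    rw [map_zero, sub_self]
  refine Filter.mem_of_superset (hOopen.mem_nhds hyO) fun z hz => ?_
  obtain ⟨u, hu, huz⟩ := hz
  have huM : u ∈ M := (Submodule.mem_inf.1 hu).1
  have huD : u ∈ D := (Submodule.mem_inf.1 hu).2
  have hkey : sfun z = sfun y + u := by
    have h0 : φ (sfun z - (sfun y + u)) = 0 := by
      rw [map_sub, map_add, hsec, hsec, huz]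
      abel
    have hmem : sfun z - (sfun y + u) ∈ D :=
      D.sub_mem (hsfunD z) (D.add_mem (hsfunD y) huD)
    have := hinjD _ hmem h0
    have h1 : sfun z - (sfun y + u) = 0 := this
    have := sub_eq_zero.1 h1
    exact this
  show sfun z ∈ S
  refine hsub ?_
  rw [Set.mem_setOf_eq, hkey]
  simpa using huM

end Apps

/-- For a short sequence `0 → W₀ → W₁ → W₂ → 0` of continuous linear maps
between profinite topological modules over a field `k` (with the discrete topology), the
following are equivalent: (i) exactness of the underlying sequence of modules;
(ii) strict-exactness; (iii) split-exactness in topological modules (exact with a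
continuous linear section); (iv) exactness of the dual sequence of continuous duals. -/
theorem profinite_ses_tfae (k W₀ W₁ W₂ : Type*) [Field k]
    [TopologicalSpace k] [DiscreteTopology k]
    [AddCommGroup W₀] [Module k W₀] [TopologicalSpace W₀] [IsTopologicalAddGroup W₀]
    [ContinuousConstSMul k W₀]
    [AddCommGroup W₁] [Module k W₁] [TopologicalSpace W₁] [IsTopologicalAddGroup W₁]
    [ContinuousConstSMul k W₁]
    [AddCommGroup W₂] [Module k W₂] [TopologicalSpace W₂] [IsTopologicalAddGroup W₂]
    [ContinuousConstSMul k W₂]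
    (h₀ : IsProfinite k W₀) (h₁ : IsProfinite k W₁) (h₂ : IsProfinite k W₂)
    (φ₀ : W₀ →ₗ[k] W₁) (φ₁ : W₁ →ₗ[k] W₂)
    (hc₀ : Continuous φ₀) (hc₁ : Continuous φ₁) :
    List.TFAE
      [ -- (i) exact as a sequence of k-modules
        Function.Injective φ₀ ∧ LinearMap.range φ₀ = LinearMap.ker φ₁ ∧
          Function.Surjective φ₁,
        -- (ii) strict-exact
        (Function.Injective φ₀ ∧ LinearMap.range φ₀ = LinearMap.ker φ₁ ∧
          Function.Surjective φ₁) ∧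
          (∀ U : Set W₀, IsOpen U → ∃ V : Set W₁, IsOpen V ∧
            V ∩ Set.range φ₀ = φ₀ '' U) ∧
          (∀ U : Set W₁, IsOpen U → ∃ V : Set W₂, IsOpen V ∧
            V ∩ Set.range φ₁ = φ₁ '' U),
        -- (iii) split-exact in topological modules
        (Function.Injective φ₀ ∧ LinearMap.range φ₀ = LinearMap.ker φ₁ ∧
          Function.Surjective φ₁) ∧
          ∃ s : W₂ →ₗ[k] W₁, Continuous s ∧ φ₁.comp s = LinearMap.id,
        -- (iv) the dual sequence of continuous duals is exact
        (∀ f : W₂ →ₗ[k] k, Continuous f → f.comp φ₁ = 0 → f = 0) ∧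
          (∀ g : W₁ →ₗ[k] k, Continuous g →
            (g.comp φ₀ = 0 ↔ ∃ f : W₂ →ₗ[k] k, Continuous f ∧ g = f.comp φ₁)) ∧
          (∀ h : W₀ →ₗ[k] k, Continuous h →
            ∃ g : W₁ →ₗ[k] k, Continuous g ∧ h = g.comp φ₀) ] := by
  tfae_have 2 → 1 := fun h => h.1
  tfae_have 3 → 1 := fun h => h.1
  tfae_have 1 → 3 := by
    rintro ⟨hinj, hrk, hsurj⟩
    obtain ⟨s, hs1, hs2⟩ := exists_section h₁ h₂ φ₁ hc₁ hsurj
    exact ⟨⟨hinj, hrk, hsurj⟩, s, hs1, hs2⟩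
  tfae_have 1 → 2 := by
    rintro ⟨hinj, hrk, hsurj⟩
    refine ⟨⟨hinj, hrk, hsurj⟩, ?_, ?_⟩
    · -- strictness of φ₀
      intro U hU
      have h1 : ∀ u : U, ∃ M, M ∈ Cofin k W₀ ∧ {y | y - u.1 ∈ M} ⊆ U := by
        intro u
        obtain ⟨M, hM, hsub⟩ := nhds_basis_cofin h₀ u.1 (hU.mem_nhds u.2)
        exact ⟨M, hM, hsub⟩
      choose Mu hMu hMuU using h1
      have h2 : ∀ u : U, ∃ V ∈ Cofin k W₁, Submodule.comap φ₀ V ≤ Mu u := fun u =>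
        exists_comap_le h₀ h₁ φ₀ hc₀ hinj (hMu u)
      choose Vu hVu hVle using h2
      refine ⟨⋃ u : U, {z | z - φ₀ u.1 ∈ Vu u}, ?_, ?_⟩
      · exact isOpen_iUnion fun u => (hVu u).1.preimage (continuous_id.sub continuous_const)
      · ext z
        constructor
        · rintro ⟨hzV, x, rfl⟩
          obtain ⟨u, hu⟩ := Set.mem_iUnion.1 hzV
          have hx : x - u.1 ∈ Submodule.comap φ₀ (Vu u) := by
            rw [Submodule.mem_comap, map_sub]
            exact hu
          exact ⟨x, hMuU u (hVle u hx), rfl⟩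
        · rintro ⟨x, hx, rfl⟩
          refine ⟨Set.mem_iUnion.2 ⟨⟨x, hx⟩, ?_⟩, ⟨x, rfl⟩⟩
          simp
    · -- strictness of φ₁
      intro U hU
      have h1 : ∀ u : U, ∃ M, M ∈ Cofin k W₁ ∧ {y | y - u.1 ∈ M} ⊆ U := by
        intro u
        obtain ⟨M, hM, hsub⟩ := nhds_basis_cofin h₁ u.1 (hU.mem_nhds u.2)
        exact ⟨M, hM, hsub⟩
      choose Mu hMu hMuU using h1
      have hsurjD : ∀ y, ∃ d ∈ (⊤ : Submodule k W₁), φ₁ d = y := by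
        intro y
        obtain ⟨w, hw⟩ := hsurj y
        exact ⟨w, trivial, hw⟩
      have htopc : IsClosed (((⊤ : Submodule k W₁) : Set W₁)) := by
        rw [Submodule.top_coe]; exact isClosed_univ
      have hopen : ∀ u : U, IsOpen (φ₁ '' ((Mu u ⊓ ⊤ : Submodule k W₁) : Set W₁)) := fun u =>
        image_inf_open h₁ h₂ φ₁ hc₁ ⊤ htopc hsurjD (hMu u)
      refine ⟨⋃ u : U, {z | z - φ₁ u.1 ∈ φ₁ '' ((Mu u ⊓ ⊤ : Submodule k W₁) : Set W₁)}, ?_, ?_⟩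
      · exact isOpen_iUnion fun u => (hopen u).preimage (continuous_id.sub continuous_const)
      · ext z
        constructor
        · rintro ⟨hzV, -⟩
          obtain ⟨u, hu⟩ := Set.mem_iUnion.1 hzV
          obtain ⟨m, hm, hmz⟩ := hu
          have hmM : m ∈ Mu u := (Submodule.mem_inf.1 hm).1
          refine ⟨u.1 + m, hMuU u ?_, ?_⟩
          · show u.1 + m - u.1 ∈ Mu u
            simpa using hmM
          · rw [map_add, hmz]
            abel
        · rintro ⟨x, hx, rfl⟩
          refine ⟨Set.mem_iUnion.2 ⟨⟨x, hx⟩, 0, Submodule.zero_mem _, ?_⟩, ⟨x, rfl⟩⟩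
          rw [map_zero, sub_self]
  tfae_have 1 → 4 := by
    rintro ⟨hinj, hrk, hsurj⟩
    obtain ⟨s, hsc, hss⟩ := exists_section h₁ h₂ φ₁ hc₁ hsurj
    have hsecpt : ∀ w, φ₁ (s w) = w := fun w => by
      simpa using LinearMap.congr_fun hss w
    refine ⟨?_, ?_, ?_⟩
    · intro f hf hf0
      ext w
      obtain ⟨v, rfl⟩ := hsurj w
      simpa using LinearMap.congr_fun hf0 v
    · intro g hg
      constructor
      · intro hg0
        refine ⟨g.comp s, hg.comp hsc, ?_⟩
        ext w
        show g w = g (s (φ₁ w))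
        have hker : s (φ₁ w) - w ∈ LinearMap.ker φ₁ := by
          rw [LinearMap.mem_ker, map_sub, hsecpt, sub_self]
        rw [← hrk] at hker
        obtain ⟨t, ht⟩ := hker
        have h1 : g (s (φ₁ w) - w) = 0 := by
          rw [← ht]
          simpa using LinearMap.congr_fun hg0 t
        rw [map_sub] at h1
        exact (sub_eq_zero.1 h1).symm
      · rintro ⟨f, hfc, rfl⟩
        ext t
        show f (φ₁ (φ₀ t)) = 0
        have hmem : φ₀ t ∈ LinearMap.ker φ₁ := by
          rw [← hrk]; exact ⟨t, rfl⟩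
        rw [LinearMap.mem_ker.1 hmem, map_zero]
    · intro h hcont
      have h0 : ⇑h ⁻¹' {0} ∈ nhds (0 : W₀) := by
        refine IsOpen.mem_nhds ?_ (by simp)
        exact (isOpen_discrete _).preimage hcont
      obtain ⟨M, hM, hMker⟩ := nhds_basis_cofin h₀ 0 h0
      obtain ⟨V, hV, hVle⟩ := exists_comap_le h₀ h₁ φ₀ hc₀ hinj hM
      set M' : Submodule k W₀ := Submodule.comap φ₀ V with hM'def
      have hψcond : ∀ a ∈ M', a ∈ LinearMap.ker (V.mkQ.comp φ₀) := by
        intro a ha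
        simp only [LinearMap.mem_ker, LinearMap.comp_apply, Submodule.mkQ_apply,
          Submodule.Quotient.mk_eq_zero]
        exact ha
      have hM'ker : ∀ a ∈ M', h a = 0 := by
        intro a ha
        have haM : a ∈ M := hVle ha
        have := hMker (show a ∈ {y | y - 0 ∈ M} by simpa using haM)
        simpa using this
      set hbar : (W₀ ⧸ M') →ₗ[k] k := M'.liftQ h hM'ker with hhbar
      set ψ : (W₀ ⧸ M') →ₗ[k] (W₁ ⧸ V) := M'.liftQ (V.mkQ.comp φ₀) hψcond with hψdef
      have hψinj : LinearMap.ker ψ = ⊥ := by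
        refine Submodule.ker_liftQ_eq_bot _ _ _ fun a ha => ?_
        simp only [LinearMap.mem_ker, LinearMap.comp_apply, Submodule.mkQ_apply,
          Submodule.Quotient.mk_eq_zero] at ha
        exact ha
      obtain ⟨r, hr⟩ := ψ.exists_leftInverse_of_injective hψinj
      refine ⟨(hbar.comp r).comp V.mkQ, ?_, ?_⟩
      · refine continuous_of_invariant V hV.1 _ fun x m hm => ?_
        have hm0 : V.mkQ m = 0 := by
          rw [Submodule.mkQ_apply, Submodule.Quotient.mk_eq_zero]; exact hm
        have hq : V.mkQ (x + m) = V.mkQ x := by rw [map_add, hm0, add_zero]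
        simp only [LinearMap.comp_apply, hq]
      · ext t
        show h t = hbar (r (V.mkQ (φ₀ t)))
        have h1 : V.mkQ (φ₀ t) = ψ (M'.mkQ t) := rfl
        have h2 : r (ψ (M'.mkQ t)) = M'.mkQ t := by
          rw [← LinearMap.comp_apply, hr, LinearMap.id_apply]
        have h3 : hbar (M'.mkQ t) = h t := rfl
        rw [h1, h2, h3]
  tfae_have 4 → 1 := by
    rintro ⟨hd1, hd2, hd3⟩
    have hbotcl₀ : IsClosed (((⊥ : Submodule k W₀) : Set W₀)) := by
      rw [Submodule.bot_coe]; exact isClosed_zero_profinite h₀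
    have hsep₂ : ∀ z : W₂, z ≠ 0 → ∃ f : W₂ →ₗ[k] k, Continuous f ∧ f z = 1 := by
      intro z hz
      have hbotcl : IsClosed (((⊥ : Submodule k W₂) : Set W₂)) := by
        rw [Submodule.bot_coe]; exact isClosed_zero_profinite h₂
      obtain ⟨f, hfc, _, hfz⟩ := exists_functional h₂ ⊥ hbotcl (by simpa using hz)
      exact ⟨f, hfc, hfz⟩
    have hker₀ : ∀ x : W₀, φ₀ x = 0 → x = 0 := by
      intro x hx
      by_contra hx0
      obtain ⟨hh, hhc, _, hh1⟩ := exists_functional h₀ ⊥ hbotcl₀ (by simpa using hx0)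
      obtain ⟨g, hgc, hge⟩ := hd3 hh hhc
      rw [hge] at hh1
      simp only [LinearMap.comp_apply, hx, map_zero] at hh1
      exact one_ne_zero hh1.symm
    have hinj : Function.Injective φ₀ := by
      intro a b hab
      have : a - b = 0 := hker₀ _ (by rw [map_sub, hab, sub_self])
      exact sub_eq_zero.1 this
    have hcomp0 : ∀ x, φ₁ (φ₀ x) = 0 := by
      intro x
      by_contra hz
      obtain ⟨f, hfc, hf1⟩ := hsep₂ _ hz
      have hg0 : (f.comp φ₁).comp φ₀ = 0 := ((hd2 (f.comp φ₁) (hfc.comp hc₁)).2 ⟨f, hfc, rfl⟩)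
      have hzero := LinearMap.congr_fun hg0 x
      simp only [LinearMap.comp_apply, LinearMap.zero_apply] at hzero
      rw [hzero] at hf1
      exact one_ne_zero hf1.symm
    have hsurj : Function.Surjective φ₁ := by
      intro y
      by_contra hy
      push_neg at hy
      have hyr : y ∉ LinearMap.range φ₁ := by
        rintro ⟨w, rfl⟩; exact hy w rfl
      have hrcl : IsClosed ((LinearMap.range φ₁ : Submodule k W₂) : Set W₂) := by
        have he : ((LinearMap.range φ₁ : Submodule k W₂) : Set W₂) =
            φ₁ '' (((⊤ : Submodule k W₁) : Set W₁)) := by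
          rw [← Submodule.map_top, Submodule.map_coe]
        rw [he]
        exact image_closed h₁ h₂ φ₁ hc₁ ⊤ (by rw [Submodule.top_coe]; exact isClosed_univ)
      obtain ⟨f, hfc, hfr, hfy⟩ := exists_functional h₂ _ hrcl hyr
      have hf0 : f.comp φ₁ = 0 := by
        ext w; exact hfr _ ⟨w, rfl⟩
      have := hd1 f hfc hf0
      rw [this] at hfy
      simpa using hfy
    have hrange : LinearMap.range φ₀ = LinearMap.ker φ₁ := by
      refine le_antisymm ?_ ?_
      · rintro _ ⟨x, rfl⟩
        exact hcomp0 x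
      · intro x hx
        by_contra hxr
        have hcl : IsClosed ((LinearMap.range φ₀ : Submodule k W₁) : Set W₁) := by
          have he : ((LinearMap.range φ₀ : Submodule k W₁) : Set W₁) =
              φ₀ '' (((⊤ : Submodule k W₀) : Set W₀)) := by
            rw [← Submodule.map_top, Submodule.map_coe]
          rw [he]
          exact image_closed h₀ h₁ φ₀ hc₀ ⊤ (by rw [Submodule.top_coe]; exact isClosed_univ)
        obtain ⟨g, hgc, hgr, hgx⟩ := exists_functional h₁ _ hcl (by exact hxr)
        have hg0 : g.comp φ₀ = 0 := by
          ext t; exact hgr _ ⟨t, rfl⟩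
        obtain ⟨f, hfc, hgf⟩ := (hd2 g hgc).1 hg0
        rw [hgf] at hgx
        simp only [LinearMap.comp_apply] at hgx
        rw [LinearMap.mem_ker.1 hx, map_zero] at hgx
        exact one_ne_zero hgx.symm
    exact ⟨hinj, hrange, hsurj⟩
  tfae_finish
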